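/- arXiv:1705.08811 — 2 statements merged into one kernel-verified Lean document; each statement's English description precedes it below -/
import Mathlib

section
/- Define F(n) = 2^n(n+1) for 1 ≤ n ≤ 4 and F(n) = 5·2^n + 2^{n-7/4} ∑_{k=5}^n 2^{k/2 + (-1)^{k+1}/4} for n ≥ 5. Then for all k ≥ 1, F(2k+1) = 2·2^{2k} + 3·2^{3k} and F(2k) = 2^{2k} + 2^{3k}. -/
theorem canonical_sequence_F (F : ℕ → ℝ)
    (hF1 : ∀ n : ℕ, 1 ≤ n → n ≤ 4 → F n = 2 ^ n * (n + 1))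
    (hF2 : ∀ n : ℕ, 5 ≤ n → F n = 5 * 2 ^ n +
      (2 : ℝ) ^ ((n : ℝ) - 7 / 4) *
        ∑ k ∈ Finset.Icc 5 n, (2 : ℝ) ^ ((k : ℝ) / 2 + (-1 : ℝ) ^ (k + 1) / 4)) :
    ∀ k : ℕ, 1 ≤ k →
      F (2 * k + 1) = 2 * 2 ^ (2 * k) + 3 * 2 ^ (3 * k) ∧
      F (2 * k) = 2 ^ (2 * k) + 2 ^ (3 * k) := by
  have two_pos : (0:ℝ) < 2 := by norm_num
  have step : ∀ n : ℕ, 5 ≤ n → F (n+1) = 2 * F n +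
      (2:ℝ) ^ ((((n:ℝ) + 1) - 7/4) + (((n:ℝ)+1)/2 + (-1:ℝ)^(n+1+1)/4)) := by
    intro n hn
    have h1 := hF2 n hn
    have h2 := hF2 (n+1) (le_trans hn (Nat.le_succ n))
    rw [Finset.sum_Icc_succ_top (by omega : 5 ≤ n+1)] at h2
    rw [h2, h1]
    have key : (2:ℝ) ^ (((n+1:ℕ):ℝ) - 7/4) = 2 * (2:ℝ) ^ ((n:ℝ) - 7/4) := by
      push_cast
      rw [show (n:ℝ)+1-7/4 = 1 + ((n:ℝ)-7/4) by ring, Real.rpow_add two_pos, Real.rpow_one]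
    have key2 : (2:ℝ) ^ ((((n:ℝ)+1) - 7/4) + (((n:ℝ)+1)/2 + (-1:ℝ)^(n+1+1)/4))
        = (2:ℝ) ^ (((n+1:ℕ):ℝ) - 7/4) * (2:ℝ) ^ ((((n+1:ℕ)):ℝ)/2 + (-1:ℝ)^(n+1+1)/4) := by
      rw [← Real.rpow_add two_pos]
      congr 1
      push_cast
      ring
    rw [key2, key, pow_succ]
    ring
  intro k hk
  induction k with
  | zero => omega
  | succ k ih =>
    rcases Nat.lt_or_ge k 2 with h | h
    · interval_cases k
      · constructor
        · rw [show 2*1+1 = 3 by norm_num, hF1 3 (by norm_num) (by norm_num)]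
          norm_num
        · rw [show 2*1 = 2 by norm_num, hF1 2 (by norm_num) (by norm_num)]
          norm_num
      · constructor
        · rw [show 2*2+1 = 5 by norm_num, hF2 5 (le_refl 5), Finset.Icc_self,
            Finset.sum_singleton, ← Real.rpow_add two_pos]
          norm_num
        · rw [show 2*2 = 4 by norm_num, hF1 4 (by norm_num) (by norm_num)]
          norm_num
    · obtain ⟨ho, he⟩ := ih (by omega)
      have hs1 := step (2*k+1) (by omega)
      have hs2 := step (2*k+2) (by omega)
      have neg1 : ((-1:ℝ))^(2*k+1+1+1) = -1 := by
        have : Odd (2*k+1+1+1) := ⟨k+1, by ring⟩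
        exact Odd.neg_one_pow this
      have neg2 : ((-1:ℝ))^(2*k+2+1+1) = 1 := by
        have : Even (2*k+2+1+1) := ⟨k+2, by ring⟩
        exact Even.neg_one_pow this
      rw [neg1] at hs1
      rw [neg2] at hs2
      have e1 : ((((2*k+1:ℕ):ℝ) + 1) - 7/4) + ((((2*k+1:ℕ):ℝ)+1)/2 + (-1)/4)
          = ((3*k+1 : ℕ):ℝ) := by push_cast; ring
      have e2 : ((((2*k+2:ℕ):ℝ) + 1) - 7/4) + ((((2*k+2:ℕ):ℝ)+1)/2 + 1/4)
          = ((3*k+3 : ℕ):ℝ) := by push_cast; ring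
      rw [e1, Real.rpow_natCast] at hs1
      rw [e2, Real.rpow_natCast] at hs2
      have hEven : F (2*k+2) = 2 ^ (2*k+2) + 2 ^ (3*k+3) := by
        rw [show (2*k+2 : ℕ) = 2*k+1+1 from rfl, hs1, ho]
        ring
      constructor
      · rw [show 2*(k+1) = 2*k+2 by ring, hs2, hEven, show 3*(k+1) = 3*k+3 by ring]
        ring
      · rw [show 2*(k+1) = 2*k+2 by ring, hEven, show 3*(k+1) = 3*k+3 by ring]
end

section
/- Let κ = 2 log 2/(log 75 − log 2), F(n) = (n+3)2^{n−1}, and V_{F(n)} = (69071/6170325)(2/75)^{n−1} − (3/368)(1/49)^{n−1}. Then lim_{n→∞} F(n)^{2/κ} · V_{F(n)} = ∞. -/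
open Filter

theorem quantization_coefficient_infinite_section2 (κ : ℝ)
    (hκ : κ = 2 * Real.log 2 / (Real.log 75 - Real.log 2))
    (F VF : ℕ → ℝ)
    (hF : ∀ n : ℕ, F n = (n + 3) * 2 ^ (n - 1))
    (hVF : ∀ n : ℕ, VF n = (69071 / 6170325) * (2 / 75 : ℝ) ^ (n - 1)
                         - (3 / 368) * (1 / 49 : ℝ) ^ (n - 1)) :
    Tendsto (fun n : ℕ => (F n) ^ (2 / κ) * VF n) atTop atTop := by
  have hlog2 : (0:ℝ) < Real.log 2 := Real.log_pos (by norm_num)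
  have hlog75 : Real.log 75 - Real.log 2 = Real.log (75/2) :=
    (Real.log_div (by norm_num) (by norm_num)).symm
  have hlog752 : (0:ℝ) < Real.log (75/2) := Real.log_pos (by norm_num)
  set e := Real.log (75/2) / Real.log 2 with he
  have he_pos : 0 < e := by positivity
  have h2κ : 2 / κ = e := by
    rw [hκ, hlog75, he]
    field_simp
  have h2e : (2:ℝ) ^ e = 75/2 := by
    rw [he, Real.rpow_def_of_pos (by norm_num), mul_comm,
      div_mul_cancel₀ _ (ne_of_gt hlog2), Real.exp_log (by norm_num)]
  have key : ∀ n : ℕ, (69071/6170325 - 3/368 : ℝ) * ((n:ℝ)+3) ^ e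
      ≤ F n ^ (2/κ) * VF n := by
    intro n
    set m := n - 1 with hm
    rw [hF n, hVF n, h2κ]
    have hpow : (((n:ℝ)+3) * 2 ^ m) ^ e = ((n:ℝ)+3)^e * (75/2:ℝ)^m := by
      rw [Real.mul_rpow (by positivity) (by positivity)]
      congr 1
      rw [← Real.rpow_natCast (2:ℝ) m, ← Real.rpow_mul (by norm_num), mul_comm,
        Real.rpow_mul (by norm_num), Real.rpow_natCast, h2e]
    rw [hpow, mul_assoc]
    have hinner : (75/2:ℝ)^m * ((69071/6170325) * (2/75:ℝ)^m - (3/368) * (1/49:ℝ)^m)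
        = 69071/6170325 - (3/368) * (75/98:ℝ)^m := by
      rw [mul_sub, mul_left_comm, ← mul_pow, mul_left_comm ((75/2:ℝ)^m), ← mul_pow]
      norm_num
    rw [hinner]
    have hrpos : (0:ℝ) ≤ ((n:ℝ)+3)^e := by positivity
    have hbound : ((75:ℝ)/98)^m ≤ 1 := pow_le_one₀ (by norm_num) (by norm_num)
    nlinarith [hrpos, hbound]
  have htend : Tendsto (fun n : ℕ => (69071/6170325 - 3/368 : ℝ) * ((n:ℝ)+3) ^ e)
      atTop atTop := by
    apply Tendsto.const_mul_atTop (by norm_num)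
    exact (tendsto_rpow_atTop he_pos).comp
      (tendsto_atTop_add_const_right atTop 3 tendsto_natCast_atTop_atTop)
  exact tendsto_atTop_mono key htend
end
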